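/- The machine has a winning strategy in A → A for every finite game A (copy-cat), i.e., → is reflexive as a reduction. -/

import Mathlib

/- Finite games as rooted labeled trees: node label = player (`true` = ⊤
machine, `false` = ⊥ environment) who wins if the play ends at that position;
each edge (child) carries the player allowed to make that move. -/
inductive Game : Type where
  | node : Bool → List (Bool × Game) → Game

/-- Negation: swap ⊤ and ⊥ everywhere (in node labels and move prefixes). -/
def Game.neg : Game → Game
  | .node l cs => .node (!l) (cs.attach.map fun c => (!c.1.1, c.1.2.neg))
decreasing_by
  obtain ⟨⟨b, g⟩, hmem⟩ := c
  have := List.sizeOf_lt_of_mem hmem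
  simp at this ⊢
  omega

/-- Parallel disjunction `A ∨ B`: positions are pairs of positions; either
player may move in either component whenever it has a legal move there (so
moves of the two components are arbitrarily interleaved); if the play ends, ⊤
wins iff it wins in at least one component (disjunction of the labels). -/
def Game.por : Game → Game → Game
  | .node la ca, .node lb cb =>
      .node (la || lb)
        ((ca.attach.map fun c => (c.1.1, c.1.2.por (.node lb cb))) ++
         (cb.attach.map fun c => (c.1.1, (Game.node la ca).por c.1.2)))
termination_by A B => (sizeOf A, sizeOf B)
decreasing_by
  · obtain ⟨⟨b, g⟩, hmem⟩ := c
    have := List.sizeOf_lt_of_mem hmem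
    simp at this ⊢
    left; omega
  · obtain ⟨⟨b, g⟩, hmem⟩ := c
    have := List.sizeOf_lt_of_mem hmem
    simp at this ⊢
    right; omega

/-- `Wins A` : the machine ⊤ has a winning strategy in `A`.  At any position ⊤
may either make one of its own moves leading to a position it wins, or wait —
in which case the position's label must be ⊤ (in case the play ends there) and
⊤ must win after every possible environment move. -/
inductive Wins : Game → Prop where
  | move {l : Bool} {cs : List (Bool × Game)} (c : Bool × Game) :
      c ∈ cs → c.1 = true → Wins c.2 → Wins (.node l cs)
  | wait {cs : List (Bool × Game)} :
      (∀ c ∈ cs, c.1 = false → Wins c.2) → Wins (.node true cs)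

/-- Parallel conjunction: `A ∧ B = ¬(¬A ∨ ¬B)`; played simultaneously in both
components, ⊤ wins iff it wins in both. -/
def Game.pand (A B : Game) : Game := (A.neg.por B.neg).neg

/-- Implication `A → B = ¬A ∨ B`. -/
def Game.imp (A B : Game) : Game := A.neg.por B

lemma Game.neg_node (l : Bool) (cs : List (Bool × Game)) :
    Game.neg (.node l cs) = .node (!l) (cs.map fun c => (!c.1, c.2.neg)) := by
  rw [Game.neg]
  simp [List.map_attach_eq_pmap]

lemma Game.por_node (la lb : Bool) (ca cb : List (Bool × Game)) :
    Game.por (.node la ca) (.node lb cb) =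
      .node (la || lb)
        ((ca.map fun c => (c.1, c.2.por (.node lb cb))) ++
         (cb.map fun c => (c.1, (Game.node la ca).por c.2))) := by
  rw [Game.por]
  simp [List.map_attach_eq_pmap]

theorem wins_neg_por : ∀ (A : Game), Wins (A.neg.por A)
  | .node l cs => by
    rw [Game.neg_node, Game.por_node]
    have hl : (!l || l) = true := by cases l <;> rfl
    rw [hl, List.map_map]
    apply Wins.wait
    intro c hc hfalse
    rw [List.mem_append] at hc
    rcases hc with hc | hc
    · -- environment moved in left (negated) component
      rw [List.mem_map] at hc
      obtain ⟨⟨b, g⟩, hmem, rfl⟩ := hc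
      simp only [Function.comp] at hfalse ⊢
      have hb : b = true := by revert hfalse; cases b <;> simp
      subst hb
      -- position : g.neg.por (node l cs); machine copies: picks (true, g) in right
      obtain ⟨lg, cg⟩ := g
      rw [Game.neg_node, Game.por_node]
      refine Wins.move (true, Game.por (Game.neg (Game.node lg cg)) (Game.node lg cg)) ?_ rfl ?_
      · rw [List.mem_append]; right
        rw [List.mem_map]
        exact ⟨(true, Game.node lg cg), hmem, by rw [Game.neg_node]⟩
      · exact wins_neg_por (Game.node lg cg)
    · rw [List.mem_map] at hc
      obtain ⟨⟨b, g⟩, hmem, rfl⟩ := hc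
      simp only at hfalse
      subst hfalse
      obtain ⟨lg, cg⟩ := g
      rw [Game.por_node]
      refine Wins.move (true, Game.por (Game.neg (Game.node lg cg)) (Game.node lg cg)) ?_ rfl (wins_neg_por (Game.node lg cg))
      · rw [List.mem_append]; left
        rw [List.mem_map]
        refine ⟨(true, (Game.node lg cg).neg), ?_, rfl⟩
        rw [List.mem_map]
        exact ⟨(false, Game.node lg cg), hmem, rfl⟩
  termination_by A => sizeOf A
  decreasing_by
    all_goals (have := List.sizeOf_lt_of_mem hmem; simp at this ⊢; omega)

/-- `→` is reflexive as a reduction: for every finite game `A`,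
the machine has a winning strategy in `A → A = ¬A ∨ A`, namely the copy-cat
strategy, which copies each environment move from one component into the other,
keeping the two runs identical, so that the machine is guaranteed to win in at
least one component of the disjunction. -/
theorem wins_imp_refl (A : Game) : Wins (A.imp A) := wins_neg_por A
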